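/- Let X be a cocompact proper CAT(0) space and fix R ≥ 0, λ > 0, and set K = (2R+1)/√(2 − 2cos λ). If Σ ⊂ ∂X is an (R,λ)-wide set with center x, then there is a subset of the sphere S_K(x) = {p ∈ X : d(p,x) = K}, of the same cardinality as Σ, in which every pair of distinct points has distance at least 1. -/

import Mathlib

open Real Filter

def IsUnitSpeedOn {X : Type*} [MetricSpace X] (γ : ℝ → X) (s : Set ℝ) : Prop :=
  ∀ a ∈ s, ∀ b ∈ s, dist (γ a) (γ b) = |a - b|

def GeodesicMetricSpace (X : Type*) [MetricSpace X] : Prop :=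
  ∀ x y : X, ∃ γ : ℝ → X, γ 0 = x ∧ γ (dist x y) = y ∧
    IsUnitSpeedOn γ (Set.Icc 0 (dist x y))

def CAT0Space (X : Type*) [MetricSpace X] : Prop :=
  GeodesicMetricSpace X ∧ ∀ x y m z : X,
    dist x m = dist x y / 2 → dist y m = dist x y / 2 →
    dist z m ^ 2 ≤ dist z x ^ 2 / 2 + dist z y ^ 2 / 2 - dist x y ^ 2 / 4

/-- The Euclidean comparison angle at `x` of the triple `(x, y, z)`. -/
noncomputable def compAngle {X : Type*} [MetricSpace X] (x y z : X) : ℝ :=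
  Real.arccos ((dist x y ^ 2 + dist x z ^ 2 - dist y z ^ 2) / (2 * dist x y * dist x z))

/-!
In a CAT(0) space the distance `t ↦ d(γ t, δ t)` between two unit-speed rays is convex
(midpoint convexity is the CN inequality, and the function is continuous). Hence for rays
`α', β'` from a common point `y` the comparison angle at `y` grows with `t` and dominates
the Alexandrov angle, so `d(α' K, β' K) = K √(2 - 2 cos ∠) ≥ K √(2 - 2 cos λ) = 2R + 1`;
and asymptotic rays, having bounded convex distance, stay within `d(y, x) ≤ R` of each
other, which leaves distance at least `1` between the points `α_ζ(K)` of the sphere.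
-/

open Set

theorem ContinuousOn.nonpos_of_midpoint_le {g : ℝ → ℝ} {a b : ℝ}
    (hg : ContinuousOn g (Icc a b))
    (hmid : ∀ u ∈ Icc a b, ∀ v ∈ Icc a b, g ((u + v) / 2) ≤ (g u + g v) / 2)
    (ha : g a ≤ 0) (hb : g b ≤ 0) {t : ℝ} (ht : t ∈ Icc a b) : g t ≤ 0 := by
  by_contra! hpos
  obtain ⟨c, hc, hmax⟩ := isCompact_Icc.exists_isMaxOn ⟨t, ht⟩ hg
  have hM : 0 < g c := hpos.trans_le (hmax ht)
  -- at the least maximum point `t₀` of `g`, which is interior, `g` is strictly smaller just to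
  -- the left, so midpoint convexity fails at `t₀`
  have hclosed : IsClosed (Icc a b ∩ g ⁻¹' {g c}) :=
    hg.preimage_isClosed_of_isClosed isClosed_Icc isClosed_singleton
  obtain ⟨t₀, ⟨ht₀, ht₀max : g t₀ = g c⟩, hleast⟩ :=
    (isCompact_Icc.of_isClosed_subset hclosed inter_subset_left).exists_isLeast
      ⟨c, hc, rfl⟩
  have hat₀ : a < t₀ := ht₀.1.lt_of_ne (by rintro rfl; linarith)
  have ht₀b : t₀ < b := ht₀.2.lt_of_ne (by rintro rfl; linarith)
  set ε := min (t₀ - a) (b - t₀)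
  have hε : 0 < ε := lt_min (by linarith) (by linarith)
  have hleft : t₀ - ε ∈ Icc a b :=
    ⟨by linarith [min_le_left (t₀ - a) (b - t₀)], by linarith⟩
  have hright : t₀ + ε ∈ Icc a b :=
    ⟨by linarith, by linarith [min_le_right (t₀ - a) (b - t₀)]⟩
  have hlt : g (t₀ - ε) < g c :=
    (hmax hleft).lt_of_ne fun h => by linarith [hleast ⟨hleft, h⟩]
  have := hmid _ hleft _ hright
  rw [show (t₀ - ε + (t₀ + ε)) / 2 = t₀ by ring] at this
  have hle : g (t₀ + ε) ≤ g c := hmax hright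
  linarith

theorem convexOn_of_midpoint_le {f : ℝ → ℝ} {s : Set ℝ} (hs : Convex ℝ s)
    (hf : ContinuousOn f s) (hmid : ∀ x ∈ s, ∀ y ∈ s, f ((x + y) / 2) ≤ (f x + f y) / 2) :
    ConvexOn ℝ s f := by
  refine convexOn_iff_slope_mono_adjacent.2 ⟨hs, fun x y z hx hz hxy hyz => ?_⟩
  have hIcc : Icc x z ⊆ s := hs.ordConnected.out hx hz
  set S := (f z - f x) / (z - x)
  have hSxz : S * (z - x) = f z - f x := div_mul_cancel₀ _ (by linarith)
  have hchord : f y - f x - (y - x) * S ≤ 0 := by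
    refine ContinuousOn.nonpos_of_midpoint_le (g := fun t => f t - f x - (t - x) * S)
      (((hf.mono hIcc).sub continuousOn_const).sub (by fun_prop)) (fun u hu v hv => ?_)
      (by simp) (by linarith) ⟨hxy.le, hyz.le⟩
    have := hmid u (hIcc hu) v (hIcc hv)
    linarith
  rw [div_le_div_iff₀ (by linarith) (by linarith)]
  nlinarith

theorem ConvexOn.antitoneOn_of_bddAbove {f : ℝ → ℝ} {a : ℝ} (hf : ConvexOn ℝ (Ici a) f)
    (hbdd : BddAbove (f '' Ici a)) : AntitoneOn f (Ici a) := by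
  intro x hx y hy hxy
  by_contra! hlt
  obtain ⟨C, hC⟩ := hbdd
  have hxy' : x < y := hxy.lt_of_ne (by rintro rfl; exact lt_irrefl _ hlt)
  set m := (f y - f x) / (y - x)
  have hm : 0 < m := div_pos (by linarith) (by linarith)
  have hCy : f y ≤ C := hC ⟨y, hy, rfl⟩
  -- beyond `y` the graph stays above the secant line through `x` and `y`, of slope `m > 0`,
  -- which exceeds `C` at `T`
  set T := y + (C - f y) / m + 1
  have hyT : y ≤ T := by linarith [div_nonneg (sub_nonneg.2 hCy) hm.le]
  have hT : T ∈ Ici a := le_trans hy hyT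
  have hslope : m ≤ (f T - f x) / (T - x) :=
    hf.secant_mono hx hy hT hxy'.ne' (by linarith) hyT
  rw [le_div_iff₀ (by linarith)] at hslope
  have hmT : m * (T - x) = (f y - f x) + (C - f y) + m := by
    have h₁ : m * (y - x) = f y - f x := div_mul_cancel₀ _ (by linarith)
    have h₂ : m * ((C - f y) / m) = C - f y := mul_div_cancel₀ _ hm.ne'
    have hT_def : T = y + (C - f y) / m + 1 := rfl
    linear_combination h₁ + h₂ + m * hT_def
  have hCT : f T ≤ C := hC ⟨T, hT, rfl⟩
  linarith

section Rays

variable {X : Type*} [MetricSpace X] {γ : ℝ → X} {s : Set ℝ}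

theorem IsUnitSpeedOn.continuousOn (hγ : IsUnitSpeedOn γ s) : ContinuousOn γ s :=
  (LipschitzOnWith.of_dist_le_mul (K := 1) fun a ha b hb => by
    rw [hγ a ha b hb, Real.dist_eq, NNReal.coe_one, one_mul]).continuousOn

theorem IsUnitSpeedOn.dist_midpoint (hγ : IsUnitSpeedOn γ s) {a b : ℝ} (ha : a ∈ s)
    (hb : b ∈ s) (hab : (a + b) / 2 ∈ s) :
    dist (γ a) (γ ((a + b) / 2)) = dist (γ a) (γ b) / 2 ∧
      dist (γ b) (γ ((a + b) / 2)) = dist (γ a) (γ b) / 2 := by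
  rw [hγ a ha _ hab, hγ b hb _ hab, hγ a ha b hb, show a - (a + b) / 2 = (a - b) / 2 by ring,
    show b - (a + b) / 2 = -((a - b) / 2) by ring, abs_neg, abs_div, abs_two]
  exact ⟨rfl, rfl⟩

theorem IsUnitSpeedOn.dist_apply_zero (hγ : IsUnitSpeedOn γ (Ici 0)) {t : ℝ} (ht : 0 ≤ t) :
    dist (γ 0) (γ t) = t := by
  rw [hγ 0 self_mem_Ici t ht, zero_sub, abs_neg, abs_of_nonneg ht]

end Rays

theorem GeodesicMetricSpace.exists_midpoint {X : Type*} [MetricSpace X]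
    (hX : GeodesicMetricSpace X) (a b : X) :
    ∃ m, dist a m = dist a b / 2 ∧ dist b m = dist a b / 2 := by
  obtain ⟨γ, hγ0, hγ1, hγ⟩ := hX a b
  have hd : 0 ≤ dist a b := dist_nonneg
  have := hγ.dist_midpoint (a := 0) (b := dist a b) ⟨le_rfl, hd⟩ ⟨hd, le_rfl⟩
    ⟨by linarith, by linarith⟩
  rw [zero_add, hγ0, hγ1] at this
  exact ⟨_, this⟩

section ComparisonAngle

variable {X : Type*} [MetricSpace X] {y p q : X} {t : ℝ}

theorem compAngle_eq_arccos (hp : dist y p = t) (hq : dist y q = t) (ht : t ≠ 0) :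
    compAngle y p q = arccos (1 - (dist p q / t) ^ 2 / 2) := by
  rw [compAngle, hp, hq]
  congr 1
  field_simp
  ring

theorem dist_eq_mul_sqrt_compAngle (hp : dist y p = t) (hq : dist y q = t) (ht : 0 < t) :
    dist p q = t * √(2 - 2 * cos (compAngle y p q)) := by
  have hpq : dist p q / t ≤ 2 := by
    rw [div_le_iff₀ ht]
    linarith [dist_triangle p y q, dist_comm p y]
  have hnn : 0 ≤ dist p q / t := by positivity
  rw [compAngle_eq_arccos hp hq ht.ne', cos_arccos (by nlinarith) (by nlinarith),
    show 2 - 2 * (1 - (dist p q / t) ^ 2 / 2) = (dist p q / t) ^ 2 by ring, sqrt_sq hnn]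
  field_simp

end ComparisonAngle

namespace CAT0Space

variable {X : Type*} [MetricSpace X]

theorem dist_midpoints_le (hX : CAT0Space X) {a b c mb mc : X}
    (hb₁ : dist a mb = dist a b / 2) (hb₂ : dist b mb = dist a b / 2)
    (hc₁ : dist a mc = dist a c / 2) (hc₂ : dist c mc = dist a c / 2) :
    dist mb mc ≤ dist b c / 2 := by
  have H₁ := hX.2 a b mb mc hb₁ hb₂
  have H₂ := hX.2 a c mc b hc₁ hc₂
  rw [dist_comm mc a, hc₁, dist_comm mc b] at H₁
  rw [dist_comm b a] at H₂
  rw [dist_comm mb mc]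
  nlinarith [dist_nonneg (x := mc) (y := mb), dist_nonneg (x := b) (y := c)]

theorem dist_midpoint_midpoint_le (hX : CAT0Space X) {a b a' b' m m' : X}
    (hm₁ : dist a m = dist a b / 2) (hm₂ : dist b m = dist a b / 2)
    (hm'₁ : dist a' m' = dist a' b' / 2) (hm'₂ : dist b' m' = dist a' b' / 2) :
    dist m m' ≤ (dist a a' + dist b b') / 2 := by
  obtain ⟨n, hn₁, hn₂⟩ := hX.1.exists_midpoint a b'
  have hmn : dist m n ≤ dist b b' / 2 := hX.dist_midpoints_le hm₁ hm₂ hn₁ hn₂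
  have hnm' : dist n m' ≤ dist a a' / 2 := by
    rw [dist_comm a b'] at hn₁ hn₂
    rw [dist_comm a' b'] at hm'₁ hm'₂
    exact hX.dist_midpoints_le hn₂ hn₁ hm'₂ hm'₁
  linarith [dist_triangle m n m']

variable {γ δ : ℝ → X}

theorem convexOn_dist (hX : CAT0Space X) (hγ : IsUnitSpeedOn γ (Ici 0))
    (hδ : IsUnitSpeedOn δ (Ici 0)) : ConvexOn ℝ (Ici 0) fun t => dist (γ t) (δ t) := by
  have hγc := hγ.continuousOn
  have hδc := hδ.continuousOn
  refine convexOn_of_midpoint_le (convex_Ici 0) (by fun_prop) fun s hs t ht => ?_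
  have hm : (s + t) / 2 ∈ Ici (0 : ℝ) := by simp only [mem_Ici] at *; linarith
  obtain ⟨hγ₁, hγ₂⟩ := hγ.dist_midpoint hs ht hm
  obtain ⟨hδ₁, hδ₂⟩ := hδ.dist_midpoint hs ht hm
  exact hX.dist_midpoint_midpoint_le hγ₁ hγ₂ hδ₁ hδ₂

theorem dist_le_dist_zero_of_bounded (hX : CAT0Space X) (hγ : IsUnitSpeedOn γ (Ici 0))
    (hδ : IsUnitSpeedOn δ (Ici 0)) (hbdd : ∃ C, ∀ t ∈ Ici (0 : ℝ), dist (γ t) (δ t) ≤ C)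
    {t : ℝ} (ht : 0 ≤ t) : dist (γ t) (δ t) ≤ dist (γ 0) (δ 0) := by
  obtain ⟨C, hC⟩ := hbdd
  exact (hX.convexOn_dist hγ hδ).antitoneOn_of_bddAbove
    ⟨C, by rintro _ ⟨s, hs, rfl⟩; exact hC s hs⟩ self_mem_Ici ht ht

theorem compAngle_mono (hX : CAT0Space X) {y : X} (hγ : IsUnitSpeedOn γ (Ici 0))
    (hδ : IsUnitSpeedOn δ (Ici 0)) (hγ0 : γ 0 = y) (hδ0 : δ 0 = y) {s t : ℝ} (hs : 0 < s)
    (hst : s ≤ t) : compAngle y (γ s) (δ s) ≤ compAngle y (γ t) (δ t) := by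
  have ht : 0 < t := hs.trans_le hst
  have hslope := (hX.convexOn_dist hγ hδ).secant_mono self_mem_Ici (mem_Ici.2 hs.le)
    (mem_Ici.2 ht.le) hs.ne' ht.ne' hst
  simp only [hγ0, hδ0, dist_self, sub_zero] at hslope
  rw [compAngle_eq_arccos (hγ0 ▸ hγ.dist_apply_zero hs.le) (hδ0 ▸ hδ.dist_apply_zero hs.le)
      hs.ne', compAngle_eq_arccos (hγ0 ▸ hγ.dist_apply_zero ht.le)
      (hδ0 ▸ hδ.dist_apply_zero ht.le) ht.ne']
  gcongr

theorem le_compAngle_of_tendsto (hX : CAT0Space X) {y : X} (hγ : IsUnitSpeedOn γ (Ici 0))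
    (hδ : IsUnitSpeedOn δ (Ici 0)) (hγ0 : γ 0 = y) (hδ0 : δ 0 = y) {θ : ℝ}
    (hθ : Tendsto (fun t => compAngle y (γ t) (δ t)) (nhdsWithin 0 (Ioi 0)) (nhds θ))
    {t : ℝ} (ht : 0 < t) : θ ≤ compAngle y (γ t) (δ t) :=
  le_of_tendsto hθ <| by
    filter_upwards [Ioo_mem_nhdsGT ht] with s hs
    exact hX.compAngle_mono hγ hδ hγ0 hδ0 hs.1 hs.2.le

theorem mul_sqrt_le_dist_of_le_angle (hX : CAT0Space X) {y : X}
    (hγ : IsUnitSpeedOn γ (Ici 0)) (hδ : IsUnitSpeedOn δ (Ici 0)) (hγ0 : γ 0 = y) (hδ0 : δ 0 = y) {θ lam : ℝ}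
    (hθ : Tendsto (fun t => compAngle y (γ t) (δ t)) (nhdsWithin 0 (Ioi 0)) (nhds θ))
    (hlam : 0 ≤ lam) (hlamθ : lam ≤ θ) {t : ℝ} (ht : 0 < t) :
    t * √(2 - 2 * cos lam) ≤ dist (γ t) (δ t) :=
  calc t * √(2 - 2 * cos lam) ≤ t * √(2 - 2 * cos (compAngle y (γ t) (δ t))) := by
        gcongr
        exact cos_le_cos_of_nonneg_of_le_pi hlam (arccos_le_pi _)
          (hlamθ.trans (hX.le_compAngle_of_tendsto hγ hδ hγ0 hδ0 hθ ht))
    _ = dist (γ t) (δ t) := (dist_eq_mul_sqrt_compAngle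
        (hγ0 ▸ hγ.dist_apply_zero ht.le) (hδ0 ▸ hδ.dist_apply_zero ht.le) ht).symm

end CAT0Space

theorem wide_set_gives_separated_sphere_subset_general {X : Type*} [MetricSpace X]
    (hX : CAT0Space X)
    (R lam : ℝ) (hR : 0 ≤ R) (hlam : 0 < lam)
    (K : ℝ) (hK : K = (2 * R + 1) / Real.sqrt (2 - 2 * Real.cos lam))
    {ι : Type*} (x : X) (α : ι → ℝ → X)
    (hray : ∀ i, α i 0 = x ∧ IsUnitSpeedOn (α i) (Set.Ici 0))
    (hwide : ∀ i j : ι, i ≠ j → ∃ y : X, dist y x ≤ R ∧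
      ∃ α' β' : ℝ → X,
        α' 0 = y ∧ IsUnitSpeedOn α' (Set.Ici 0) ∧
          (∃ C : ℝ, ∀ t ∈ Set.Ici (0:ℝ), dist (α' t) (α i t) ≤ C) ∧
        β' 0 = y ∧ IsUnitSpeedOn β' (Set.Ici 0) ∧
          (∃ C : ℝ, ∀ t ∈ Set.Ici (0:ℝ), dist (β' t) (α j t) ≤ C) ∧
        ∃ θ : ℝ, lam ≤ θ ∧
          Tendsto (fun t => compAngle y (α' t) (β' t)) (nhdsWithin 0 (Set.Ioi 0)) (nhds θ)) :
    ∃ g : ι → X, Function.Injective g ∧ (∀ i, dist (g i) x = K) ∧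
      ∀ i j : ι, i ≠ j → 1 ≤ dist (g i) (g j) := by
  have hK₀ : 0 ≤ K := hK ▸ div_nonneg (by linarith) (sqrt_nonneg _)
  have hsep : ∀ i j, i ≠ j → 1 ≤ dist (α i K) (α j K) := by
    intro i j hij
    obtain ⟨y, hyx, α', β', hα'0, hα', hα'i, hβ'0, hβ', hβ'j, θ, hlamθ, hθ⟩ := hwide i j hij
    have hθπ : θ ≤ π := le_of_tendsto hθ (.of_forall fun _ => arccos_le_pi _)
    have hc : 0 < √(2 - 2 * cos lam) := sqrt_pos.2 <| by
      linarith [cos_lt_cos_of_nonneg_of_le_pi le_rfl (hlamθ.trans hθπ) hlam, cos_zero]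
    have hKpos : 0 < K := hK ▸ div_pos (by linarith) hc
    have hfar : 2 * R + 1 ≤ dist (α' K) (β' K) := by
      rw [← div_mul_cancel₀ (2 * R + 1) hc.ne', ← hK]
      exact hX.mul_sqrt_le_dist_of_le_angle hα' hβ' hα'0 hβ'0 hθ hlam.le hlamθ hKpos
    have hnear_i : dist (α' K) (α i K) ≤ R := by
      have := hX.dist_le_dist_zero_of_bounded hα' (hray i).2 hα'i hK₀
      rw [hα'0, (hray i).1] at this
      exact this.trans hyx
    have hnear_j : dist (β' K) (α j K) ≤ R := by
      have := hX.dist_le_dist_zero_of_bounded hβ' (hray j).2 hβ'j hK₀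
      rw [hβ'0, (hray j).1] at this
      exact this.trans hyx
    linarith [dist_triangle4 (α' K) (α i K) (α j K) (β' K), dist_comm (α j K) (β' K)]
  refine ⟨fun i => α i K, fun i j hij => ?_, fun i => ?_, hsep⟩
  · by_contra hne
    linarith [hsep i j hne, show dist (α i K) (α j K) = 0 from dist_eq_zero.2 hij]
  · rw [dist_comm, ← (hray i).1, (hray i).2.dist_apply_zero hK₀]

/-- Let `X` be a cocompact proper CAT(0) space, `R ≥ 0`, `λ > 0` and
`K = (2R+1)/√(2 - 2 cos λ)`.  If `Σ` (here an index type `ι` of boundary points,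
represented by unit-speed rays `α i` from `x`) is `(R,λ)`-wide with center `x` — i.e. for
each pair `i ≠ j` there is `y ∈ B_R(x)` and rays `α', β'` from `y` asymptotic to `α i`,
`α j` making Alexandrov angle ≥ λ at `y` — then there is a subset of the sphere
`S_K(x)` of the same cardinality as `Σ` that is `1`-separated. -/
theorem wide_set_gives_separated_sphere_subset {X : Type*} [MetricSpace X] [ProperSpace X]
    (hX : CAT0Space X)
    (hcocompact : ∃ C : Set X, IsCompact C ∧ ∀ p : X, ∃ φ : X ≃ᵢ X, φ p ∈ C)
    (R lam : ℝ) (hR : 0 ≤ R) (hlam : 0 < lam)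
    (K : ℝ) (hK : K = (2 * R + 1) / Real.sqrt (2 - 2 * Real.cos lam))
    {ι : Type*} (x : X) (α : ι → ℝ → X)
    (hray : ∀ i, α i 0 = x ∧ IsUnitSpeedOn (α i) (Set.Ici 0))
    (hwide : ∀ i j : ι, i ≠ j → ∃ y : X, dist y x ≤ R ∧
      ∃ α' β' : ℝ → X,
        α' 0 = y ∧ IsUnitSpeedOn α' (Set.Ici 0) ∧
          (∃ C : ℝ, ∀ t ∈ Set.Ici (0:ℝ), dist (α' t) (α i t) ≤ C) ∧
        β' 0 = y ∧ IsUnitSpeedOn β' (Set.Ici 0) ∧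
          (∃ C : ℝ, ∀ t ∈ Set.Ici (0:ℝ), dist (β' t) (α j t) ≤ C) ∧
        ∃ θ : ℝ, lam ≤ θ ∧
          Tendsto (fun t => compAngle y (α' t) (β' t)) (nhdsWithin 0 (Set.Ioi 0)) (nhds θ)) :
    ∃ g : ι → X, Function.Injective g ∧ (∀ i, dist (g i) x = K) ∧
      ∀ i j : ι, i ≠ j → 1 ≤ dist (g i) (g j) :=
  wide_set_gives_separated_sphere_subset_general hX R lam hR hlam K hK x α hray hwide
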